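/- Let Γ_M be the union of M ∪ M̄ and the axioms of the translated formula φ, and let Δ consist of atoms of the form R!(c̄). Then Γ_M, Δ ⊢ • is intuitionistically derivable iff there is an atom R!(c̄) ∈ Δ such that P̄ ∪ M̄ ⊢ R(c̄). -/

import Mathlib

namespace ASP

/-- A ground clause `head ← pos, ¬neg` of an answer set program. -/
structure GClause (α : Type) where
  head : α
  pos : List α
  neg : List α

variable {α : Type}

/-- Immediate-consequence operator of the Gelfond–Lifschitz reduct `P^M`:
`F(I) = I ∪ {a | some clause a ← a₁,…,aₙ of P^M has all aᵢ ∈ I}`. -/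
def tcons (P : Set (GClause α)) (M : Set α) : Set α →o Set α where
  toFun I := I ∪ {a | ∃ c ∈ P, c.head = a ∧ (∀ b ∈ c.pos, b ∈ I) ∧ (∀ b ∈ c.neg, b ∉ M)}
  monotone' := by
    intro I J h x hx
    rcases hx with hx | ⟨c, hc, h1, h2, h3⟩
    · exact Or.inl (h hx)
    · exact Or.inr ⟨c, hc, h1, fun b hb => h (h2 b hb), h3⟩

/-- The interpretation `I(P,M)`: least fixed point of the immediate-consequence
operator of the reduct `P^M`. -/
def interp (P : Set (GClause α)) (M : Set α) : Set α := OrderHom.lfp (tcons P M)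

/-- `M` is a stable model (answer set) of `P` iff `M = I(P,M)`. -/
def IsStable (P : Set (GClause α)) (M : Set α) : Prop := M = interp P M

end ASP
namespace ASP

/-- Formulas of minimal implicational propositional logic over atoms `α`. -/
inductive PForm (α : Type) where
  | at_ : α → PForm α
  | imp : PForm α → PForm α → PForm α

/-- Provability in minimal propositional logic (only → introduction/elimination). -/
inductive PPrv {α : Type} : Set (PForm α) → PForm α → Prop
  | ax {Γ : Set (PForm α)} {φ : PForm α} : φ ∈ Γ → PPrv Γ φ
  | impI {Γ : Set (PForm α)} {φ ψ : PForm α} : PPrv (insert φ Γ) ψ → PPrv Γ (.imp φ ψ)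
  | impE {Γ : Set (PForm α)} {φ ψ : PForm α} : PPrv Γ (.imp φ ψ) → PPrv Γ φ → PPrv Γ ψ

end ASP
namespace TR

/-- A ground atom `R(c̄)`: predicate index plus constant arguments. -/
structure GA where
  pred : ℕ
  args : List ℕ
deriving DecidableEq

/-- Atom alphabet of the translated formula φ: for every program predicate `R`
there are `R`, `R̄`, `R!`, `R?`; pair predicates `RP`; clause predicates `K⁰`
and nullary `K̄⁰`; and the nullary `•, ∘, A, B, ⊙`. -/
inductive At where
  | pos : GA → At
  | bar : GA → At
  | bang : GA → At
  | quest : GA → At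
  | mem : GA → GA → At
  | k : ℕ → List ℕ → At
  | kbar : ℕ → At
  | bullet : At
  | circ : At
  | unsound : At
  | incomplete : At
  | lup : At
deriving DecidableEq

abbrev F := ASP.PForm At

def av (a : At) : F := .at_ a

def imps (l : List F) (t : F) : F := l.foldr ASP.PForm.imp t

/-- Axioms (1): `(R(c̄)→⊙) → (R̄(c̄)→⊙) → ⊙`. -/
def ax1 (B : Set GA) : Set F :=
  {f | ∃ a ∈ B, f = .imp (.imp (av (.pos a)) (av .lup)) (.imp (.imp (av (.bar a)) (av .lup)) (av .lup))}

/-- Axioms (2): `Ω→⊙`, `A→⊙`, `B→⊙`. -/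
def ax2 (ω : GA) : Set F :=
  {.imp (av (.pos ω)) (av .lup), .imp (av .unsound) (av .lup), .imp (av .incomplete) (av .lup)}

/-- Axioms (3): `R̄(c̄) → (R!(c̄)→•) → A`. -/
def ax3 (B : Set GA) : Set F :=
  {f | ∃ a ∈ B, f = .imp (av (.bar a)) (.imp (.imp (av (.bang a)) (av .bullet)) (av .unsound))}

/-- Axioms (4): `R(c̄) → (R?(c̄)→∘) → B`. -/
def ax4 (B : Set GA) : Set F :=
  {f | ∃ a ∈ B, f = .imp (av (.pos a)) (.imp (.imp (av (.quest a)) (av .circ)) (av .incomplete))}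

/-- Axiom (5) for a ground clause `R(ē) ← P₁(c̄₁),…,P_r(c̄_r), ¬S₁(d̄₁),…,¬S_s(d̄_s)`:
`R!(ē) → (P₁!(c̄₁)→•) → ⋯ → (P_r!(c̄_r)→•) → S̄₁(d̄₁) → ⋯ → S̄_s(d̄_s) → •`. -/
def clax (c : ASP.GClause GA) : F :=
  .imp (av (.bang c.head))
    (imps (c.pos.map (fun b => .imp (av (.bang b)) (av .bullet)) ++
           c.neg.map (fun s => av (.bar s))) (av .bullet))

def ax5 (Pg : List (ASP.GClause GA)) : Set F := {f | ∃ c ∈ Pg, f = clax c}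

/-- Axioms (6): `R?(c̄) → (K⁰₁(c̄)→K̄⁰₁) → ⋯ → (K⁰_l(c̄)→K̄⁰_l) → ∘`,
where K₁,…,K_l are all clauses whose target predicate is that of the atom. -/
def ax6 (Pg : List (ASP.GClause GA)) (B : Set GA) : Set F :=
  {f | ∃ a ∈ B, f = .imp (av (.quest a))
    (imps (((Pg.zipIdx.map Prod.swap).filter (fun jc => jc.2.head.pred == a.pred)).map
      (fun jc => ASP.PForm.imp (av (.k jc.1 a.args)) (av (.kbar jc.1)))) (av .circ))}

/-- Axioms (7)-(8): a mismatch between the queried arguments and the clause head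
arguments immediately yields `K⁰(c̄) → K̄⁰`. -/
def ax7 (Pg : List (ASP.GClause GA)) (B : Set GA) : Set F :=
  {f | ∃ jc ∈ (Pg.zipIdx.map Prod.swap), ∃ a ∈ B, a.pred = jc.2.head.pred ∧ a.args ≠ jc.2.head.args ∧
    f = .imp (av (.k jc.1 a.args)) (av (.kbar jc.1))}

/-- Axioms (10): `K⁰(ē) → (P?(c̄) → RP(ē,c̄) → ∘) → K̄⁰`, for each positive body atom. -/
def ax10 (Pg : List (ASP.GClause GA)) : Set F :=
  {f | ∃ jc ∈ (Pg.zipIdx.map Prod.swap), ∃ b ∈ jc.2.pos, f = .imp (av (.k jc.1 jc.2.head.args))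
    (.imp (.imp (av (.quest b)) (.imp (av (.mem jc.2.head b)) (av .circ))) (av (.kbar jc.1)))}

/-- Axioms (11): `K⁰(ē) → S(d̄) → K̄⁰`, for each negative body atom `¬S(d̄)`. -/
def ax11 (Pg : List (ASP.GClause GA)) : Set F :=
  {f | ∃ jc ∈ (Pg.zipIdx.map Prod.swap), ∃ s ∈ jc.2.neg, f = .imp (av (.k jc.1 jc.2.head.args))
    (.imp (av (.pos s)) (av (.kbar jc.1)))}

/-- Axioms (12): transitivity `RP(ā,b̄) → PQ(b̄,c̄) → (RQ(ā,c̄)→∘) → ∘`. -/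
def ax12 (B : Set GA) : Set F :=
  {f | ∃ a ∈ B, ∃ b ∈ B, ∃ c ∈ B, f = .imp (av (.mem a b)) (.imp (av (.mem b c))
    (.imp (.imp (av (.mem a c)) (av .circ)) (av .circ)))}

/-- Axioms (13): loop detection `PP(ā,ā) → ∘`. -/
def ax13 (B : Set GA) : Set F := {f | ∃ a ∈ B, f = .imp (av (.mem a a)) (av .circ)}

/-- All axioms of the translated formula φ. -/
def Axioms (Pg : List (ASP.GClause GA)) (B : Set GA) (ω : GA) : Set F :=
  ax1 B ∪ ax2 ω ∪ ax3 B ∪ ax4 B ∪ ax5 Pg ∪ ax6 Pg B ∪ ax7 Pg B ∪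
    ax10 Pg ∪ ax11 Pg ∪ ax12 B ∪ ax13 B

/-- `Γ_M`: the union of `M ∪ M̄` with the axioms of φ. -/
def GammaM (Pg : List (ASP.GClause GA)) (B : Set GA) (ω : GA) (M : Set GA) : Set F :=
  Axioms Pg B ω ∪ {f | ∃ a ∈ M, f = av (.pos a)} ∪ {f | ∃ a ∈ B, a ∉ M ∧ f = av (.bar a)}

/-- The implicational formula of a clause of `P̄` (negative atoms replaced by barred ones). -/
def cbarF (c : ASP.GClause GA) : F :=
  imps (c.pos.map (fun b => av (.pos b)) ++ c.neg.map (fun s => av (.bar s))) (av (.pos c.head))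

/-- The environment `P̄ ∪ M̄`. -/
def PbarMbar (Pg : List (ASP.GClause GA)) (B : Set GA) (M : Set GA) : Set F :=
  {f | ∃ c ∈ Pg, f = cbarF c} ∪ {f | ∃ a ∈ B, a ∉ M ∧ f = av (.bar a)}

def progSet (Pg : List (ASP.GClause GA)) : Set (ASP.GClause GA) := {c | c ∈ Pg}

/-- All atoms of the program lie in the Herbrand base `B`. -/
def WfProg (Pg : List (ASP.GClause GA)) (B : Set GA) : Prop :=
  ∀ c ∈ Pg, c.head ∈ B ∧ (∀ b ∈ c.pos, b ∈ B) ∧ (∀ s ∈ c.neg, s ∈ B)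

end TR

/-! For `⇒`, read derivations in a two-valued model where `•` means "some atom of `Δ` is
derivable from `P̄ ∪ M̄`" and `R!(c̄)` means "if `R(c̄)` is derivable then `•`"; the clause
axioms (5) are then exactly the closure of derivability under the clauses of `P̄`, and every
other axiom has a target that is simply true. For `⇐`, induction on the derivation of `R(c̄)`
turns each clause of `P̄` into a proof of `R!(c̄) → •` through its axiom (5). -/

namespace ASP

namespace PForm

variable {α : Type}

def eval (v : α → Prop) : PForm α → Prop
  | at_ a => v a
  | imp φ ψ => eval v φ → eval v ψ

theorem eval_foldr_imp (v : α → Prop) (l : List (PForm α)) (t : PForm α) :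
    eval v (l.foldr imp t) ↔ ((∀ φ ∈ l, eval v φ) → eval v t) := by
  induction l with
  | nil => simp
  | cons φ l ih => simp [eval, ih, and_imp]

end PForm

namespace PPrv

variable {α : Type} {Γ Γ' : Set (PForm α)} {φ : PForm α}

theorem mono (h : PPrv Γ φ) (hΓ : Γ ⊆ Γ') : PPrv Γ' φ := by
  induction h generalizing Γ' with
  | ax h => exact ax (hΓ h)
  | impI _ ih => exact impI (ih (Set.insert_subset_insert hΓ))
  | impE _ _ ih₁ ih₂ => exact impE (ih₁ hΓ) (ih₂ hΓ)

theorem foldr_imp_elim {l : List (PForm α)} {t : PForm α} (h : PPrv Γ (l.foldr .imp t))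
    (hl : ∀ ψ ∈ l, PPrv Γ ψ) : PPrv Γ t := by
  induction l with
  | nil => exact h
  | cons ψ l ih => exact ih (impE h (hl ψ (by simp))) fun χ hχ => hl χ (by simp [hχ])

theorem sound {v : α → Prop} (h : PPrv Γ φ) (hΓ : ∀ ψ ∈ Γ, ψ.eval v) : φ.eval v := by
  induction h with
  | ax h => exact hΓ _ h
  | impI _ ih =>
    intro hφ
    exact ih (Set.forall_mem_insert.mpr ⟨hφ, hΓ⟩)
  | impE _ _ ih₁ ih₂ => exact ih₁ hΓ (ih₂ hΓ)

end PPrv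

end ASP

namespace TR

open ASP

variable {Pg : List (GClause GA)} {B M Δ : Set GA}

/-- Derivability of `R(c̄)` from `P̄ ∪ M̄`, where `S̄(d̄) ∈ M̄` means `d̄ ∈ B \ M`. -/
inductive Derivable (Pg : List (GClause GA)) (B M : Set GA) : GA → Prop
  | clause {c : GClause GA} : c ∈ Pg → (∀ b ∈ c.pos, Derivable Pg B M b) →
      (∀ s ∈ c.neg, s ∈ B ∧ s ∉ M) → Derivable Pg B M c.head

theorem Derivable.pprv_pbarMbar {a : GA} (h : Derivable Pg B M a) :
    PPrv (PbarMbar Pg B M) (av (.pos a)) := by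
  induction h with
  | @clause c hc _ hneg ih =>
    refine PPrv.foldr_imp_elim (PPrv.ax (Or.inl ⟨c, hc, rfl⟩) : PPrv _ (cbarF c)) ?_
    simp only [List.mem_append, List.mem_map]
    rintro _ (⟨b, hb, rfl⟩ | ⟨s, hs, rfl⟩)
    · exact ih b hb
    · exact PPrv.ax (Or.inr ⟨s, (hneg s hs).1, (hneg s hs).2, rfl⟩)

theorem derivable_of_pprv_pbarMbar {a : GA} (h : PPrv (PbarMbar Pg B M) (av (.pos a))) :
    Derivable Pg B M a := by
  let v : At → Prop
    | .pos a => Derivable Pg B M a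
    | .bar a => a ∈ B ∧ a ∉ M
    | _ => True
  refine PPrv.sound (v := v) h ?_
  rintro _ (⟨c, hc, rfl⟩ | ⟨b, hbB, hbM, rfl⟩)
  · refine (PForm.eval_foldr_imp v _ _).mpr fun hbody => ?_
    simp only [List.mem_append, List.mem_map, or_imp, forall_exists_index, and_imp,
      forall_apply_eq_imp_iff₂, forall_and] at hbody
    exact Derivable.clause hc hbody.1 hbody.2
  · exact ⟨hbB, hbM⟩

theorem pprv_pbarMbar_iff {a : GA} :
    PPrv (PbarMbar Pg B M) (av (.pos a)) ↔ Derivable Pg B M a :=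
  ⟨derivable_of_pprv_pbarMbar, Derivable.pprv_pbarMbar⟩

theorem Derivable.pprv_bang_imp_bullet {Γ : Set F} (hax : ax5 Pg ⊆ Γ)
    (hbar : {f | ∃ a ∈ B, a ∉ M ∧ f = av (.bar a)} ⊆ Γ) {a : GA} (h : Derivable Pg B M a) :
    PPrv Γ (.imp (av (.bang a)) (av .bullet)) := by
  induction h with
  | @clause c hc _ hneg ih =>
    refine PPrv.impI (PPrv.foldr_imp_elim
      (PPrv.impE (PPrv.ax (Set.mem_insert_of_mem _ (hax ⟨c, hc, rfl⟩)))
        (PPrv.ax (Set.mem_insert _ _))) ?_)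
    simp only [List.mem_append, List.mem_map]
    rintro _ (⟨b, hb, rfl⟩ | ⟨s, hs, rfl⟩)
    · exact (ih b hb).mono (Set.subset_insert _ _)
    · exact PPrv.ax (Set.mem_insert_of_mem _ (hbar ⟨s, (hneg s hs).1, (hneg s hs).2, rfl⟩))

variable (Pg B M Δ) in
def bangVal : At → Prop
  | .bar a => a ∈ B ∧ a ∉ M
  | .bang a => Derivable Pg B M a → ∃ b ∈ Δ, Derivable Pg B M b
  | .bullet => ∃ b ∈ Δ, Derivable Pg B M b
  | _ => True

theorem eval_clax_bangVal {c : GClause GA} (hc : c ∈ Pg) :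
    (clax c).eval (bangVal Pg B M Δ) := by
  intro hhead
  refine (PForm.eval_foldr_imp _ _ _).mpr fun hbody => ?_
  by_contra hnone
  simp only [List.mem_append, List.mem_map, or_imp, forall_exists_index, and_imp,
    forall_apply_eq_imp_iff₂, forall_and] at hbody
  have hpos : ∀ b ∈ c.pos, Derivable Pg B M b := fun b hb =>
    by_contra fun hnb => hnone (hbody.1 b hb fun hdb => absurd hdb hnb)
  exact hnone (hhead (Derivable.clause hc hpos hbody.2))

theorem eval_bangVal_of_mem {ω : GA} :
    ∀ g ∈ GammaM Pg B ω M ∪ {f | ∃ a ∈ Δ, f = av (.bang a)}, g.eval (bangVal Pg B M Δ) := by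
  rintro g (((hg | ⟨a, -, rfl⟩) | ⟨a, haB, haM, rfl⟩) | ⟨a, haΔ, rfl⟩)
  · rcases hg with ((((((((((⟨a, -, rfl⟩ | hg) | ⟨a, -, rfl⟩) | ⟨a, -, rfl⟩) | ⟨c, hc, rfl⟩) |
      ⟨a, -, rfl⟩) | ⟨jc, -, a, -, -, -, rfl⟩) | ⟨jc, -, b, -, rfl⟩) | ⟨jc, -, s, -, rfl⟩) |
      ⟨a, -, b, -, c, -, rfl⟩) | ⟨a, -, rfl⟩)
    · exact fun _ _ => trivial
    · rcases hg with rfl | rfl | rfl <;> exact fun _ => trivial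
    · exact fun _ _ => trivial
    · exact fun _ _ => trivial
    · exact eval_clax_bangVal hc
    · exact fun _ => (PForm.eval_foldr_imp _ _ _).mpr fun _ => trivial
    · exact fun _ => trivial
    · exact fun _ _ => trivial
    · exact fun _ _ => trivial
    · exact fun _ _ _ => trivial
    · exact fun _ => trivial
  · trivial
  · exact ⟨haB, haM⟩
  · exact fun h => ⟨a, haΔ, h⟩

end TR

theorem stmt7_general (Pg : List (ASP.GClause TR.GA)) (B : Set TR.GA) (ω : TR.GA)
    (M Δ : Set TR.GA) :
    ASP.PPrv (TR.GammaM Pg B ω M ∪ {f | ∃ a ∈ Δ, f = TR.av (.bang a)})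
        (TR.av .bullet) ↔
      ∃ a ∈ Δ, ASP.PPrv (TR.PbarMbar Pg B M) (TR.av (.pos a)) := by
  simp only [TR.pprv_pbarMbar_iff]
  constructor
  · exact fun h => ASP.PPrv.sound h TR.eval_bangVal_of_mem
  · rintro ⟨a, haΔ, ha⟩
    refine .impE (ha.pprv_bang_imp_bullet ?_ ?_) (.ax (Or.inr ⟨a, haΔ, rfl⟩))
    · intro f hf
      simp only [TR.GammaM, TR.Axioms, Set.mem_union]
      tauto
    · exact fun f hf => Or.inl (Or.inr hf)

/-- With Δ a set of assumptions of the form `R!(c̄)`: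
`Γ_M, Δ ⊢ •` iff some `R!(c̄) ∈ Δ` satisfies `P̄ ∪ M̄ ⊢ R(c̄)`. -/
theorem stmt7 (Pg : List (ASP.GClause TR.GA)) (B : Set TR.GA) (ω : TR.GA)
    (M Δ : Set TR.GA) (hW : TR.WfProg Pg B) (hM : M ⊆ B) (hΔ : Δ ⊆ B) :
    ASP.PPrv (TR.GammaM Pg B ω M ∪ {f | ∃ a ∈ Δ, f = TR.av (.bang a)})
        (TR.av .bullet) ↔
      ∃ a ∈ Δ, ASP.PPrv (TR.PbarMbar Pg B M) (TR.av (.pos a)) :=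
  stmt7_general Pg B ω M Δ
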